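/- For any n-dimensional probability vector y, T^M(y) = T(y). In particular, if x^{⊗k} ⊗ c' ≺ y^{⊗k} ⊗ c' for some integer k ≥ 1 and some probability vector c', then there exists a probability vector c'' such that x ⊗ c'' ≺ y ⊗ c''. -/

import Mathlib

open Finset

variable {ι κ : Type*}

/-- `e_l(x)`. -/
noncomputable def eSum [Fintype ι] (x : ι → ℝ) (l : ℕ) : ℝ :=
  sSup {r : ℝ | ∃ s : Finset ι, s.card = l ∧ r = ∑ i ∈ s, x i}

/-- `x ≺ y`. -/
def Maj [Fintype ι] (x y : ι → ℝ) : Prop :=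
  (∀ l : ℕ, 1 ≤ l → l < Fintype.card ι → eSum x l ≤ eSum y l) ∧
    ∑ i, x i = ∑ i, y i

def IsProbVec [Fintype ι] (x : ι → ℝ) : Prop :=
  (∀ i, 0 ≤ x i) ∧ ∑ i, x i = 1

/-- `x ⊗ c`. -/
def kron (x : ι → ℝ) (c : κ → ℝ) : ι × κ → ℝ := fun p => x p.1 * c p.2

/-- `x^{⊗k}`. -/
def kpow (x : ι → ℝ) (k : ℕ) : (Fin k → ι) → ℝ := fun f => ∏ j, x (f j)

/-- `x ⊕ c`. -/
def dsum (x : ι → ℝ) (c : κ → ℝ) : ι ⊕ κ → ℝ := Sum.elim x c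

/-- `x ⊕ ⋯ ⊕ x` with `k` summands. -/
def dpow (x : ι → ℝ) (k : ℕ) : Fin k × ι → ℝ := fun p => x p.2

/-- `x ∈ S°(y)`. -/
def InteriorS [Fintype ι] (x y : ι → ℝ) : Prop :=
  (∀ l : ℕ, 1 ≤ l → l < Fintype.card ι → eSum x l < eSum y l) ∧
    ∑ i, x i = ∑ i, y i

/-- `d_x`. -/
noncomputable def dsupp (x : ι → ℝ) : ℕ := Nat.card (Function.support x)

/-- The `α`-Renyi entropy `S^{(α)}(x)`; at `α = 1` it is the Shannon entropy. -/
noncomputable def renyi [Fintype ι] (x : ι → ℝ) (α : ℝ) : ℝ :=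
  if α = 1 then -∑ i, x i * Real.logb 2 (x i)
  else (if 0 ≤ α then (1 : ℝ) else -1) / (1 - α) *
    Real.logb 2 (∑ i, if x i = 0 then 0 else x i ^ α)

def RenyiGE [Fintype ι] [Fintype κ] (x : ι → ℝ) (y : κ → ℝ) : Prop :=
  (dsupp x > dsupp y ∧ ∀ α : ℝ, 0 ≤ α → renyi y α ≤ renyi x α) ∨
  (dsupp x = dsupp y ∧ ∀ α : ℝ, renyi y α ≤ renyi x α)

/-! If `x^{⊗k} ⊗ c ≺ y^{⊗k} ⊗ c`, the normalized `c'' = ⊕_{j<k} x^{⊗j} ⊗ y^{⊗(k-1-j)} ⊗ c` is a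
catalyst for `x` and `y`. Indeed, up to a permutation of the entries and the factor `1/k`,
`x ⊗ c''` is `x^{⊗k} ⊗ c ⊕ W` and `y ⊗ c''` is `y^{⊗k} ⊗ c ⊕ W` with the same
`W = ⊕_{0<j<k} x^{⊗j} ⊗ y^{⊗(k-j)} ⊗ c`, and majorization is invariant under permuting the entries
of either side, under scaling, and under adjoining common entries. The converse is `k = 1`. -/

section Majorization

variable [Fintype ι] [Fintype κ]

lemma eSum_set_finite (x : ι → ℝ) (l : ℕ) :
    {r : ℝ | ∃ s : Finset ι, s.card = l ∧ r = ∑ i ∈ s, x i}.Finite :=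
  (Set.finite_range fun s : Finset ι => ∑ i ∈ s, x i).subset fun _ ⟨s, _, hr⟩ => ⟨s, hr.symm⟩

lemma sum_le_eSum (x : ι → ℝ) {s : Finset ι} {l : ℕ} (hs : s.card = l) :
    ∑ i ∈ s, x i ≤ eSum x l :=
  le_csSup (eSum_set_finite x l).bddAbove ⟨s, hs, rfl⟩

lemma exists_eSum_eq (x : ι → ℝ) {l : ℕ} (hl : l ≤ Fintype.card ι) :
    ∃ s : Finset ι, s.card = l ∧ eSum x l = ∑ i ∈ s, x i := by
  obtain ⟨s, -, hs⟩ := exists_subset_card_eq (s := (univ : Finset ι)) (by simpa using hl)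
  have hne : {r : ℝ | ∃ s : Finset ι, s.card = l ∧ r = ∑ i ∈ s, x i}.Nonempty := ⟨_, s, hs, rfl⟩
  exact hne.csSup_mem (eSum_set_finite x l)

lemma eSum_le_of_forall_sum_le {x : ι → ℝ} {l : ℕ} {b : ℝ} (hl : l ≤ Fintype.card ι)
    (h : ∀ s : Finset ι, s.card = l → ∑ i ∈ s, x i ≤ b) : eSum x l ≤ b := by
  obtain ⟨s, hs, he⟩ := exists_eSum_eq x hl
  exact he ▸ h s hs

lemma eSum_zero (x : ι → ℝ) : eSum x 0 = 0 := by
  obtain ⟨s, hs, he⟩ := exists_eSum_eq x (Nat.zero_le _)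
  rw [he, card_eq_zero.mp hs, sum_empty]

lemma eSum_card (x : ι → ℝ) : eSum x (Fintype.card ι) = ∑ i, x i := by
  obtain ⟨s, hs, he⟩ := exists_eSum_eq x le_rfl
  rw [he, (card_eq_iff_eq_univ s).mp (by simpa using hs)]

lemma eSum_comp_equiv (e : κ ≃ ι) (x : ι → ℝ) (l : ℕ) : eSum (x ∘ e) l = eSum x l := by
  unfold eSum
  congr 1
  ext r
  constructor
  · rintro ⟨s, rfl, rfl⟩
    exact ⟨s.map e.toEmbedding, card_map _, by simp [sum_map]⟩
  · rintro ⟨s, rfl, rfl⟩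
    exact ⟨s.map e.symm.toEmbedding, card_map _, by simp [sum_map]⟩

lemma eSum_const_mul {t : ℝ} (ht : 0 ≤ t) (x : ι → ℝ) {l : ℕ} (hl : l ≤ Fintype.card ι) :
    eSum (fun i => t * x i) l = t * eSum x l := by
  refine le_antisymm (eSum_le_of_forall_sum_le hl fun s hs => ?_) ?_
  · rw [← mul_sum]
    exact mul_le_mul_of_nonneg_left (sum_le_eSum x hs) ht
  · obtain ⟨s, hs, he⟩ := exists_eSum_eq x hl
    rw [he, mul_sum]
    exact sum_le_eSum _ hs

namespace Maj

variable {x y : ι → ℝ}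

lemma eSum_le (h : Maj x y) {l : ℕ} (hl : l ≤ Fintype.card ι) : eSum x l ≤ eSum y l := by
  rcases Nat.eq_zero_or_pos l with rfl | hl₀
  · rw [eSum_zero, eSum_zero]
  rcases hl.eq_or_lt with rfl | hlt
  · rw [eSum_card, eSum_card, h.2]
  · exact h.1 l hl₀ hlt

lemma comp_equiv (h : Maj x y) (e₁ e₂ : κ ≃ ι) : Maj (x ∘ e₁) (y ∘ e₂) := by
  refine ⟨fun l hl₀ hl => ?_, ?_⟩
  · rw [eSum_comp_equiv, eSum_comp_equiv]
    exact h.1 l hl₀ (Fintype.card_congr e₁ ▸ hl)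
  · simpa only [Function.comp_apply, Equiv.sum_comp] using h.2

lemma const_mul (h : Maj x y) {t : ℝ} (ht : 0 ≤ t) :
    Maj (fun i => t * x i) (fun i => t * y i) := by
  refine ⟨fun l hl₀ hl => ?_, by rw [← mul_sum, ← mul_sum, h.2]⟩
  rw [eSum_const_mul ht x hl.le, eSum_const_mul ht y hl.le]
  exact mul_le_mul_of_nonneg_left (h.1 l hl₀ hl) ht

lemma dsum_right (h : Maj x y) (w : κ → ℝ) : Maj (dsum x w) (dsum y w) := by
  refine ⟨fun l _ hl => eSum_le_of_forall_sum_le hl.le fun s hs => ?_,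
    by simp only [dsum, Fintype.sum_sum_type, Sum.elim_inl, Sum.elim_inr, h.2]⟩
  obtain ⟨t, ht, hte⟩ := exists_eSum_eq y (card_le_univ s.toLeft)
  calc ∑ i ∈ s, dsum x w i = ∑ a ∈ s.toLeft, x a + ∑ b ∈ s.toRight, w b :=
        sum_sum_eq_sum_toLeft_add_sum_toRight s _
    _ ≤ ∑ a ∈ t, y a + ∑ b ∈ s.toRight, w b := by
        gcongr
        exact hte ▸ (sum_le_eSum x rfl).trans (h.eSum_le (card_le_univ _))
    _ = ∑ i ∈ t.disjSum s.toRight, dsum y w i := (sum_disjSum t s.toRight (dsum y w)).symm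
    _ ≤ eSum (dsum y w) l :=
        sum_le_eSum _ (by rw [card_disjSum, ht, card_toLeft_add_card_toRight, hs])

end Maj

lemma exists_fin_catalyst {x y : ι → ℝ} (c : κ → ℝ) (hc : ∀ i, 0 ≤ c i)
    (hpos : 0 < ∑ i, c i) (h : Maj (kron x c) (kron y c)) :
    ∃ (m : ℕ) (c' : Fin m → ℝ), IsProbVec c' ∧ Maj (kron x c') (kron y c') := by
  set t := (∑ i, c i)⁻¹
  have ht : 0 ≤ t := inv_nonneg.mpr hpos.le
  let e := (Fintype.equivFin κ).symm
  refine ⟨_, fun i => t * c (e i), ⟨fun i => mul_nonneg ht (hc _), ?_⟩, ?_⟩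
  · rw [← mul_sum, Equiv.sum_comp e c, inv_mul_cancel₀ hpos.ne']
  · have hscaled : ∀ z : ι → ℝ, kron z (fun i => t * c i) = fun p => t * kron z c p :=
      fun z => funext fun p => mul_left_comm _ _ _
    have h' := h.const_mul ht
    rw [← hscaled, ← hscaled] at h'
    exact h'.comp_equiv ((Equiv.refl ι).prodCongr e) ((Equiv.refl ι).prodCongr e)

end Majorization

section Reindexing

variable (ι κ : Type*) (k : ℕ)

def consIndexEquiv :
    ι × Fin (k + 1) × (Fin k → ι) × κ ≃ Fin (k + 1) × (Fin (k + 1) → ι) × κ where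
  toFun p := (p.2.1, Fin.cons p.1 p.2.2.1, p.2.2.2)
  invFun q := (q.2.1 0, q.1, Fin.tail q.2.1, q.2.2)
  left_inv _ := by simp
  right_inv _ := by simp

def snocIndexEquiv :
    ι × Fin (k + 1) × (Fin k → ι) × κ ≃ Fin (k + 1) × (Fin (k + 1) → ι) × κ where
  toFun p := (p.2.1, Fin.snoc p.2.2.1 p.1, p.2.2.2)
  invFun q := (q.2.1 (Fin.last k), q.1, Fin.init q.2.1, q.2.2)
  left_inv _ := by simp
  right_inv _ := by simp

def splitOffEquiv (A : Type*) (p : Fin (k + 1)) : Fin (k + 1) × A ≃ A ⊕ Fin k × A :=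
  ((finSuccEquiv' p).prodCongr (Equiv.refl A)).trans optionProdEquiv

end Reindexing

section Catalyst

variable (x y : ι → ℝ)

/-- `x^{⊗t} ⊗ y^{⊗(k-t)}` for `t ≤ k`. -/
def mixedPow (k t : ℕ) (g : Fin k → ι) : ℝ :=
  ∏ s : Fin k, (if (s : ℕ) < t then x else y) (g s)

lemma mixedPow_zero (k : ℕ) : mixedPow x y k 0 = kpow y k := by
  funext g
  simp [mixedPow, kpow]

lemma mixedPow_of_le {k t : ℕ} (hkt : k ≤ t) : mixedPow x y k t = kpow x k := by
  funext g
  exact prod_congr rfl fun s _ => by rw [if_pos (s.isLt.trans_le hkt)]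

lemma mixedPow_succ_succ (k t : ℕ) (g : Fin (k + 1) → ι) :
    mixedPow x y (k + 1) (t + 1) g = x (g 0) * mixedPow x y k t (Fin.tail g) := by
  simp [mixedPow, Fin.prod_univ_succ, Fin.tail]

lemma mixedPow_succ_of_le {k t : ℕ} (htk : t ≤ k) (g : Fin (k + 1) → ι) :
    mixedPow x y (k + 1) t g = mixedPow x y k t (Fin.init g) * y (g (Fin.last k)) := by
  simp [mixedPow, Fin.prod_univ_castSucc, Fin.init, htk.not_gt]

lemma sum_mixedPow [Fintype ι] (hx : ∑ i, x i = 1) (hy : ∑ i, y i = 1) (k t : ℕ) :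
    ∑ g, mixedPow x y k t g = 1 := by
  simp only [mixedPow]
  rw [← Fintype.prod_sum]
  refine prod_eq_one fun s _ => ?_
  split_ifs <;> assumption

/-- `⊕_{j ≤ k} x^{⊗j} ⊗ y^{⊗(k-j)} ⊗ c`, not normalized. -/
def powerCatalyst (c : κ → ℝ) (k : ℕ) : Fin (k + 1) × (Fin k → ι) × κ → ℝ :=
  fun p => mixedPow x y k p.1 p.2.1 * c p.2.2

/-- `⊕_{0 < j ≤ k} x^{⊗j} ⊗ y^{⊗(k+1-j)} ⊗ c`. -/
def middleBlocks (c : κ → ℝ) (k : ℕ) : Fin k × (Fin (k + 1) → ι) × κ → ℝ :=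
  fun p => mixedPow x y (k + 1) (p.1 + 1) p.2.1 * c p.2.2

variable (c : κ → ℝ) (k : ℕ)

lemma kron_powerCatalyst_left :
    kron x (powerCatalyst x y c k) =
      dsum (kron (kpow x (k + 1)) c) (middleBlocks x y c k) ∘
        (consIndexEquiv ι κ k).trans (splitOffEquiv k _ (Fin.last k)) := by
  rw [← Equiv.comp_symm_eq]
  funext q
  rcases q with ⟨g, i⟩ | ⟨j, g, i⟩
  · show x (g 0) * (mixedPow x y k k (Fin.tail g) * c i) = kpow x (k + 1) g * c i
    rw [← mul_assoc, ← mixedPow_succ_succ, mixedPow_of_le x y le_rfl]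
  · simp [kron, powerCatalyst, dsum, splitOffEquiv, consIndexEquiv, middleBlocks,
      mixedPow_succ_succ, mul_assoc]

lemma kron_powerCatalyst_right :
    kron y (powerCatalyst x y c k) =
      dsum (kron (kpow y (k + 1)) c) (middleBlocks x y c k) ∘
        (snocIndexEquiv ι κ k).trans (splitOffEquiv k _ 0) := by
  rw [← Equiv.comp_symm_eq]
  funext q
  rcases q with ⟨g, i⟩ | ⟨j, g, i⟩
  · show y (g (Fin.last k)) * (mixedPow x y k 0 (Fin.init g) * c i) = kpow y (k + 1) g * c i
    rw [← mixedPow_zero x y (k + 1), mixedPow_succ_of_le x y (Nat.zero_le k)]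
    ring
  · show y (g (Fin.last k)) * (mixedPow x y k (j + 1) (Fin.init g) * c i) =
      mixedPow x y (k + 1) (j + 1) g * c i
    rw [mixedPow_succ_of_le x y j.isLt]
    ring

variable {x y c k}

lemma powerCatalyst_nonneg (hx : ∀ i, 0 ≤ x i) (hy : ∀ i, 0 ≤ y i) (hc : ∀ i, 0 ≤ c i)
    (p : Fin (k + 1) × (Fin k → ι) × κ) : 0 ≤ powerCatalyst x y c k p :=
  mul_nonneg (prod_nonneg fun s _ => by split_ifs; exacts [hx _, hy _]) (hc _)

variable [Fintype ι] [Fintype κ]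

lemma sum_powerCatalyst (hx : ∑ i, x i = 1) (hy : ∑ i, y i = 1) (hc : ∑ i, c i = 1) :
    ∑ p, powerCatalyst x y c k p = k + 1 := by
  simp [powerCatalyst, Fintype.sum_prod_type, ← sum_mul_sum, sum_mixedPow x y hx hy, hc]

lemma Maj.kron_powerCatalyst (h : Maj (kron (kpow x (k + 1)) c) (kron (kpow y (k + 1)) c)) :
    Maj (kron x (powerCatalyst x y c k)) (kron y (powerCatalyst x y c k)) := by
  rw [kron_powerCatalyst_left, kron_powerCatalyst_right]
  exact (h.dsum_right _).comp_equiv _ _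

end Catalyst

lemma kpow_one (x : ι → ℝ) : kpow x 1 = x ∘ Equiv.funUnique (Fin 1) ι := by
  funext f
  simp [kpow]

/-- `T^M(y) = T(y)`: `x^{⊗k} ⊗ c' ≺ y^{⊗k} ⊗ c'` for some `k ≥ 1` and some
probability vector `c'` iff there is a probability vector `c''` with `x ⊗ c'' ≺ y ⊗ c''`. -/
theorem stmt3 {n : ℕ} (x y : Fin n → ℝ) (hx : IsProbVec x) (hy : IsProbVec y) :
    (∃ k : ℕ, 1 ≤ k ∧ ∃ (m : ℕ) (c : Fin m → ℝ), IsProbVec c ∧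
        Maj (kron (kpow x k) c) (kron (kpow y k) c)) ↔
      (∃ (m : ℕ) (c : Fin m → ℝ), IsProbVec c ∧ Maj (kron x c) (kron y c)) := by
  constructor
  · rintro ⟨_ | k, hk, m, c, hc, h⟩
    · omega
    refine exists_fin_catalyst _ (powerCatalyst_nonneg hx.1 hy.1 hc.1) ?_ h.kron_powerCatalyst
    rw [sum_powerCatalyst hx.2 hy.2 hc.2]
    positivity
  · rintro ⟨m, c, hc, h⟩
    refine ⟨1, le_rfl, m, c, hc, ?_⟩
    rw [kpow_one, kpow_one]
    let e := (Equiv.funUnique (Fin 1) (Fin n)).prodCongr (Equiv.refl (Fin m))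
    exact h.comp_equiv e e
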